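/- arXiv:2405.00584 — 3 statements merged into one kernel-verified Lean document; each statement's English description precedes it below -/
import Mathlib

section
/- Let k ≥ 2 and let C be a Type II Z_{2k}-code of length n. Let w ∈ (Z/2k)^n \ C be a vector every coordinate of which equals 0 or k, such that: if k is odd then n_k(w) is divisible by 4, and if k is even but not divisible by 4 then n_k(w) is even. Set C_0 = {v ∈ C : ⟨w,v⟩ = 0} and C̃ = C_0 + ⟨w⟩. Then C̃ is self-orthogonal (i.e., ⟨x,y⟩ = 0 for all x,y ∈ C̃), every codeword of C̃ has Euclidean weight divisible by 4k, and |C̃| = |C|. -/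
open Finset

/-- Inner product of two vectors over `ZMod N`. -/
def innerZ {N n : ℕ} (x y : Fin n → ZMod N) : ZMod N := ∑ i, x i * y i

/-- Euclidean weight of a vector over `ZMod N`. -/
def euclWt {N n : ℕ} (x : Fin n → ZMod N) : ℕ :=
  ∑ i, min ((x i).val ^ 2) ((N - (x i).val) ^ 2)

/-- Number of coordinates of `x` equal to `a`. -/
def cntEq {N n : ℕ} (a : ZMod N) (x : Fin n → ZMod N) : ℕ :=
  (Finset.univ.filter fun j => x j = a).card

/-- A code is self-dual if it equals its dual. -/
def IsSelfDual {N n : ℕ} (C : AddSubgroup (Fin n → ZMod N)) : Prop :=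
  ∀ x, x ∈ C ↔ ∀ y ∈ C, innerZ x y = 0

/-- The subcode `{v ∈ C : ⟨w, v⟩ = 0}`. -/
def evenPart {N n : ℕ} (C : AddSubgroup (Fin n → ZMod N)) (w : Fin n → ZMod N) :
    AddSubgroup (Fin n → ZMod N) where
  carrier := {v | v ∈ C ∧ innerZ w v = 0}
  zero_mem' := ⟨C.zero_mem, by simp [innerZ]⟩
  add_mem' := by
    rintro a b ⟨ha, ha0⟩ ⟨hb, hb0⟩
    refine ⟨C.add_mem ha hb, ?_⟩
    have h : innerZ w (a + b) = innerZ w a + innerZ w b := by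
      simp [innerZ, mul_add, Finset.sum_add_distrib]
    rw [h, ha0, hb0, add_zero]
  neg_mem' := by
    rintro a ⟨ha, ha0⟩
    refine ⟨C.neg_mem ha, ?_⟩
    have h : innerZ w (-a) = - innerZ w a := by
      simp [innerZ]
    rw [h, ha0, neg_zero]

/-- `kv` extended to all of `ℕ` by zero. -/
def extk {m : ℕ} (kv : Fin m → ℕ) : ℕ → ℕ := fun t => if h : t < m then kv ⟨t, h⟩ else 0

/-- Partial sums `k_1 + ⋯ + k_j`. -/
def psum {m : ℕ} (kv : Fin m → ℕ) (j : ℕ) : ℕ := ∑ t ∈ Finset.range j, extk kv t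

/-- `G` is a generator matrix in standard form of type `(k_1, …, k_m)`. -/
def StandardForm {N : ℕ} {m n : ℕ} (kv : Fin m → ℕ)
    (G : Fin (psum kv m) → Fin n → ZMod N) : Prop :=
  psum kv m ≤ n ∧
  ∀ (j : Fin m) (r : Fin (psum kv m)), psum kv (j : ℕ) ≤ (r : ℕ) → (r : ℕ) < psum kv ((j : ℕ) + 1) →
    ∀ c : Fin n,
      (∀ l : Fin m, psum kv (l : ℕ) ≤ (c : ℕ) → (c : ℕ) < psum kv ((l : ℕ) + 1) →
        (l < j → G r c = 0) ∧
        (l = j → G r c = if (r : ℕ) = (c : ℕ) then (2 ^ (j : ℕ) : ZMod N) else 0)) ∧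
      ((psum kv m ≤ (c : ℕ) ∨
        ∃ l : Fin m, j < l ∧ psum kv (l : ℕ) ≤ (c : ℕ) ∧ (c : ℕ) < psum kv ((l : ℕ) + 1)) →
        ∃ a : ZMod N, G r c = 2 ^ (j : ℕ) * a)

/-- The minimum Euclidean weight over nonzero codewords equals `d`. -/
def minEuclWtIs {N n : ℕ} (C : AddSubgroup (Fin n → ZMod N)) (d : ℕ) : Prop :=
  (∀ x ∈ C, x ≠ 0 → d ≤ euclWt x) ∧ ∃ x ∈ C, x ≠ 0 ∧ euclWt x = d

/-- Coordinatewise reduction modulo 4. -/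
def res4 {n : ℕ} : (Fin n → ZMod 8) →+ (Fin n → ZMod 4) where
  toFun := fun x i => ZMod.castHom (by norm_num : (4 : ℕ) ∣ 8) (ZMod 4) (x i)
  map_zero' := by ext i; simp
  map_add' := by intro a b; ext i; exact map_add (ZMod.castHom (by norm_num) _) _ _

/-- Coordinatewise reduction modulo 2. -/
def res2 {n : ℕ} : (Fin n → ZMod 8) →+ (Fin n → ZMod 2) where
  toFun := fun x i => ZMod.castHom (by norm_num : (2 : ℕ) ∣ 8) (ZMod 2) (x i)
  map_zero' := by ext i; simp
  map_add' := by intro a b; ext i; exact map_add (ZMod.castHom (by norm_num) _) _ _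

/-- Hamming weight of a binary vector. -/
def hammingWt {n : ℕ} (y : Fin n → ZMod 2) : ℕ :=
  (Finset.univ.filter fun i => y i ≠ 0).card

/-- Equivalence of codes: a permutation of coordinates combined with sign changes. -/
def codeEquiv {N n : ℕ} (C C' : AddSubgroup (Fin n → ZMod N)) : Prop :=
  ∃ (σ : Equiv.Perm (Fin n)) (ε : Fin n → ZMod N),
    (∀ i, ε i = 1 ∨ ε i = -1) ∧
    ∀ y, y ∈ C' ↔ ∃ x ∈ C, y = fun i => ε i * x (σ i)

lemma innerZ_add_right' {N n : ℕ} (x y z : Fin n → ZMod N) :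
    innerZ x (y + z) = innerZ x y + innerZ x z := by
  simp [innerZ, mul_add, Finset.sum_add_distrib]

lemma innerZ_add_left' {N n : ℕ} (x y z : Fin n → ZMod N) :
    innerZ (x + y) z = innerZ x z + innerZ y z := by
  simp [innerZ, add_mul, Finset.sum_add_distrib]

lemma innerZ_sub_right' {N n : ℕ} (x y z : Fin n → ZMod N) :
    innerZ x (y - z) = innerZ x y - innerZ x z := by
  simp [innerZ, mul_sub, Finset.sum_sub_distrib]

lemma innerZ_comm' {N n : ℕ} (x y : Fin n → ZMod N) : innerZ x y = innerZ y x := by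
  simp [innerZ, mul_comm]

/-- `C̃ = C₀ + ⟨w⟩` is self-orthogonal, all its Euclidean
weights are divisible by `4k`, and `|C̃| = |C|`. -/
theorem doubling_selforthogonal {k n : ℕ} (hk : 2 ≤ k)
    (C : AddSubgroup (Fin n → ZMod (2 * k)))
    (hsd : IsSelfDual C) (hT2 : ∀ x ∈ C, 4 * k ∣ euclWt x)
    (w : Fin n → ZMod (2 * k)) (hwC : w ∉ C)
    (hcoord : ∀ i, w i = 0 ∨ w i = (k : ZMod (2 * k)))
    (hodd : Odd k → 4 ∣ cntEq (k : ZMod (2 * k)) w)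
    (heven : Even k → ¬ (4 ∣ k) → 2 ∣ cntEq (k : ZMod (2 * k)) w) :
    (∀ x ∈ evenPart C w ⊔ AddSubgroup.closure {w},
      ∀ y ∈ evenPart C w ⊔ AddSubgroup.closure {w}, innerZ x y = 0) ∧
    (∀ x ∈ evenPart C w ⊔ AddSubgroup.closure {w}, 4 * k ∣ euclWt x) ∧
    Nat.card (evenPart C w ⊔ AddSubgroup.closure {w} : AddSubgroup (Fin n → ZMod (2 * k)))
      = Nat.card C := by
  haveI : NeZero (2 * k) := ⟨by omega⟩
  have hmemE : ∀ x, x ∈ evenPart C w ↔ x ∈ C ∧ innerZ w x = 0 := fun _ => Iff.rfl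
  have hk0 : (k : ZMod (2 * k)) ≠ 0 := by
    intro h
    rw [ZMod.natCast_eq_zero_iff] at h
    have := Nat.le_of_dvd (by omega) h
    omega
  have hkval : ((k : ZMod (2 * k))).val = k := by
    rw [ZMod.val_natCast]; exact Nat.mod_eq_of_lt (by omega)
  have hwval : ∀ i, (w i).val = if w i = (k : ZMod (2 * k)) then k else 0 := by
    intro i
    by_cases h : w i = (k : ZMod (2 * k))
    · simp [h, hkval]
    · have h0 : w i = 0 := (hcoord i).resolve_right h
      simp [h0, Ne.symm hk0]
  -- w + w = 0
  have hw2 : w + w = 0 := by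
    funext i
    rcases hcoord i with h | h <;> rw [Pi.add_apply, h]
    · simp
    · show (k : ZMod (2*k)) + k = (0 : Fin n → ZMod (2*k)) i
      rw [← Nat.cast_add, show k + k = 2 * k by ring, ZMod.natCast_self]
      rfl
  have hclos : ∀ x, x ∈ AddSubgroup.closure {w} ↔ x = 0 ∨ x = w := by
    intro x
    constructor
    · rw [AddSubgroup.mem_closure_singleton]
      rintro ⟨m, rfl⟩
      rcases Int.even_or_odd m with ⟨q, rfl⟩ | ⟨q, rfl⟩
      · left
        rw [show q + q = q * 2 by ring, mul_zsmul, two_zsmul, hw2, smul_zero]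
      · right
        rw [add_zsmul, one_zsmul, show 2 * q = q * 2 by ring, mul_zsmul, two_zsmul,
          hw2, smul_zero, zero_add]
    · rintro (rfl | rfl)
      · exact zero_mem _
      · exact AddSubgroup.subset_closure rfl
  have hmem : ∀ x, x ∈ evenPart C w ⊔ AddSubgroup.closure {w} ↔
      ∃ v ∈ evenPart C w, x = v ∨ x = v + w := by
    intro x
    rw [AddSubgroup.mem_sup]
    constructor
    · rintro ⟨y, hy, z, hz, rfl⟩
      rcases (hclos z).1 hz with rfl | rfl
      · exact ⟨y, hy, Or.inl (add_zero y)⟩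
      · exact ⟨y, hy, Or.inr rfl⟩
    · rintro ⟨v, hv, h | h⟩
      · exact ⟨v, hv, 0, zero_mem _, by rw [h, add_zero]⟩
      · exact ⟨v, hv, w, (hclos w).2 (Or.inr rfl), h.symm⟩
  -- Euclidean weight mod 4k equals sum of squares of values
  have hmin : ∀ a : ZMod (2 * k),
      (4 * (k:ℤ)) ∣ ((min (a.val ^ 2) ((2 * k - a.val) ^ 2) : ℕ) : ℤ) - (a.val : ℤ) ^ 2 := by
    intro a
    have hva : a.val < 2 * k := ZMod.val_lt a
    rcases min_choice (a.val ^ 2) ((2 * k - a.val) ^ 2) with h | h <;> rw [h]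
    · simp
    · have hc : (((2 * k - a.val) ^ 2 : ℕ) : ℤ) = (2 * (k:ℤ) - (a.val:ℤ)) ^ 2 := by
        push_cast [Nat.cast_sub hva.le]
        ring
      rw [hc]
      exact ⟨(k:ℤ) - a.val, by ring⟩
  have hwtdvd : ∀ x : Fin n → ZMod (2 * k),
      ((4 * (k:ℤ)) ∣ ∑ i, ((x i).val : ℤ) ^ 2) ↔ 4 * k ∣ euclWt x := by
    intro x
    have h1 : (4 * (k:ℤ)) ∣ ((euclWt x : ℕ) : ℤ) - ∑ i, ((x i).val : ℤ) ^ 2 := by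
      unfold euclWt
      rw [Nat.cast_sum, ← Finset.sum_sub_distrib]
      exact Finset.dvd_sum fun i _ => hmin (x i)
    constructor
    · intro h
      have h2 := dvd_add h1 h
      rw [sub_add_cancel] at h2
      have h3 : ((4 * k : ℕ) : ℤ) ∣ ((euclWt x : ℕ) : ℤ) := by push_cast; exact_mod_cast h2
      exact_mod_cast h3
    · intro h
      have h2 : (4 * (k:ℤ)) ∣ ((euclWt x : ℕ) : ℤ) := by
        obtain ⟨c, hc⟩ := h
        exact ⟨(c:ℤ), by exact_mod_cast congrArg (Nat.cast : ℕ → ℤ) hc⟩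
      have := dvd_sub h2 h1
      rwa [sub_sub_cancel] at this
  -- square congruence
  have hsq : ∀ (t : ℤ) (a : ZMod (2 * k)), ((t : ZMod (2 * k)) = a) →
      (4 * (k:ℤ)) ∣ t ^ 2 - (a.val : ℤ) ^ 2 := by
    intro t a h
    have hc : (((t - (a.val : ℤ)) : ℤ) : ZMod (2 * k)) = 0 := by
      push_cast
      rw [h, ZMod.natCast_val, ZMod.cast_id, sub_self]
    obtain ⟨m, hm⟩ := (ZMod.intCast_zmod_eq_zero_iff_dvd _ _).mp hc
    have ht : t = (a.val : ℤ) + 2 * k * m := by push_cast at hm; linarith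
    exact ⟨m * (a.val : ℤ) + k * m ^ 2, by rw [ht]; ring⟩
  -- sum of squares of w-values
  have hnkk : 4 ∣ cntEq (k : ZMod (2 * k)) w * k := by
    rcases Nat.even_or_odd k with he | ho
    · by_cases h4k : 4 ∣ k
      · exact Dvd.dvd.mul_left h4k _
      · obtain ⟨a, ha⟩ := heven he h4k
        obtain ⟨b, hb⟩ := he
        exact ⟨a * b, by rw [ha, hb]; ring⟩
    · obtain ⟨c, hc⟩ := hodd ho
      exact ⟨c * k, by rw [hc]; ring⟩
  have hWsum : ∑ i, ((w i).val : ℤ) ^ 2 = (cntEq (k : ZMod (2 * k)) w : ℤ) * (k:ℤ) ^ 2 := by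
    unfold cntEq
    calc ∑ i, ((w i).val : ℤ) ^ 2
        = ∑ i, (if w i = (k : ZMod (2 * k)) then ((k:ℤ))^2 else 0) := by
          refine Finset.sum_congr rfl fun i _ => ?_
          rw [hwval i]
          split <;> simp
      _ = ∑ i ∈ Finset.univ.filter (fun j => w j = (k : ZMod (2 * k))), ((k:ℤ))^2 := by
          rw [Finset.sum_filter]
      _ = _ := by rw [Finset.sum_const, nsmul_eq_mul]
  have hW : (4 * (k:ℤ)) ∣ ∑ i, ((w i).val : ℤ) ^ 2 := by
    rw [hWsum]
    obtain ⟨c, hc⟩ := hnkk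
    refine ⟨(c:ℤ), ?_⟩
    have h2 : ((cntEq (k : ZMod (2 * k)) w * k : ℕ) : ℤ) = 4 * c :=
      by exact_mod_cast congrArg (Nat.cast : ℕ → ℤ) hc
    push_cast at h2
    linear_combination (k:ℤ) * h2
  -- inner product with w as a cast
  have hcastin : ∀ v : Fin n → ZMod (2 * k),
      ((∑ i, (w i).val * (v i).val : ℕ) : ZMod (2 * k)) = innerZ w v := by
    intro v
    push_cast
    refine Finset.sum_congr rfl fun i _ => ?_
    rw [ZMod.natCast_val, ZMod.cast_id, ZMod.natCast_val, ZMod.cast_id]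
  have hS : ∀ v : Fin n → ZMod (2 * k), innerZ w v = 0 →
      (4 * (k:ℤ)) ∣ 2 * ∑ i, ((w i).val : ℤ) * ((v i).val : ℤ) := by
    intro v hv0
    have hdvd := (ZMod.natCast_eq_zero_iff _ _).mp ((hcastin v).trans hv0)
    obtain ⟨c, hc⟩ := hdvd
    refine ⟨(c:ℤ), ?_⟩
    have h2 : ((∑ i, (w i).val * (v i).val : ℕ) : ℤ) = 2 * k * c := by
      exact_mod_cast congrArg (Nat.cast : ℕ → ℤ) hc
    push_cast at h2
    linarith
  -- ⟨w, w⟩ = 0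
  have hww : innerZ w w = 0 := by
    have h2 : ((2 * k : ℕ) : ℤ) ∣ ∑ i, ((w i).val : ℤ) ^ 2 :=
      dvd_trans ⟨2, by push_cast; ring⟩ hW
    have h3 := (ZMod.intCast_zmod_eq_zero_iff_dvd _ _).mpr h2
    push_cast [ZMod.natCast_val, ZMod.cast_id] at h3
    simpa [innerZ, sq] using h3
  -- inner products with w are 0 or k
  have hk2 : ∀ s : ZMod (2 * k), (k : ZMod (2 * k)) * s = 0 ∨ (k : ZMod (2 * k)) * s = k := by
    intro s
    have hrep : (k : ZMod (2 * k)) * s = ((k * s.val : ℕ) : ZMod (2 * k)) := by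
      push_cast [ZMod.natCast_val, ZMod.cast_id]
      ring
    rcases Nat.even_or_odd s.val with ⟨a, ha⟩ | ⟨a, ha⟩
    · left
      rw [hrep, ha, ZMod.natCast_eq_zero_iff]
      exact ⟨a, by ring⟩
    · right
      rw [hrep, ha, show k * (2 * a + 1) = 2 * k * a + k by ring]
      have : ((2 * k * a + k : ℕ) : ZMod (2 * k)) = ((2 * k : ℕ) : ZMod (2 * k)) * a + k := by
        push_cast; ring
      rw [this, ZMod.natCast_self, zero_mul, zero_add]
  have hwvk : ∀ v, innerZ w v = 0 ∨ innerZ w v = (k : ZMod (2 * k)) := by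
    intro v
    have hrw : innerZ w v = (k : ZMod (2 * k)) * ∑ i, (if w i = (k : ZMod (2 * k)) then v i else 0) := by
      unfold innerZ
      rw [Finset.mul_sum]
      refine Finset.sum_congr rfl fun i _ => ?_
      by_cases h : w i = (k : ZMod (2 * k))
      · simp [h]
      · have h0 := (hcoord i).resolve_right h
        simp [h0, Ne.symm hk0]
    rw [hrw]
    exact hk2 _
  -- the three goals
  refine ⟨?_, ?_, ?_⟩
  · -- self-orthogonality
    intro x hx y hy
    obtain ⟨v1, hv1, hx'⟩ := (hmem x).1 hx
    obtain ⟨v2, hv2, hy'⟩ := (hmem y).1 hy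
    rw [hmemE] at hv1 hv2
    have h12 : innerZ v1 v2 = 0 := (hsd v1).mp hv1.1 v2 hv2.1
    have h1w : innerZ v1 w = 0 := by rw [innerZ_comm']; exact hv1.2
    have hw2' : innerZ w v2 = 0 := hv2.2
    rcases hx' with rfl | rfl <;> rcases hy' with rfl | rfl
    · exact h12
    · rw [innerZ_add_right', h12, h1w, add_zero]
    · rw [innerZ_add_left', h12, hw2', add_zero]
    · rw [innerZ_add_left', innerZ_add_right', innerZ_add_right', h12, h1w, hw2', hww]
      simp
  · -- Euclidean weights
    intro x hx
    obtain ⟨v, hv, h | h⟩ := (hmem x).1 hx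
    · rw [h]; exact hT2 v ((hmemE v).1 hv).1
    · rw [h]
      rw [hmemE] at hv
      rw [← hwtdvd]
      have hA : (4 * (k:ℤ)) ∣ (∑ i, (((v + w) i).val : ℤ) ^ 2) -
          ∑ i, (((v i).val : ℤ) + ((w i).val : ℤ)) ^ 2 := by
        rw [← Finset.sum_sub_distrib]
        refine Finset.dvd_sum fun i _ => ?_
        rw [dvd_sub_comm]
        refine hsq _ _ ?_
        push_cast [ZMod.natCast_val, ZMod.cast_id]
        rfl
      have hexp : ∑ i, (((v i).val : ℤ) + ((w i).val : ℤ)) ^ 2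
          = (∑ i, ((v i).val : ℤ) ^ 2) + 2 * (∑ i, ((w i).val : ℤ) * ((v i).val : ℤ))
            + ∑ i, ((w i).val : ℤ) ^ 2 := by
        rw [Finset.mul_sum, ← Finset.sum_add_distrib, ← Finset.sum_add_distrib]
        exact Finset.sum_congr rfl fun i _ => by ring
      have hTv : (4 * (k:ℤ)) ∣ ∑ i, ((v i).val : ℤ) ^ 2 := (hwtdvd v).mpr (hT2 v hv.1)
      have h2 : (4 * (k:ℤ)) ∣ ∑ i, (((v i).val : ℤ) + ((w i).val : ℤ)) ^ 2 := by
        rw [hexp]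
        exact dvd_add (dvd_add hTv (hS v hv.2)) hW
      have := dvd_add hA h2
      rwa [sub_add_cancel] at this
  · -- cardinality
    have hexu : ∃ u ∈ C, innerZ w u = (k : ZMod (2 * k)) := by
      by_contra hcon
      push_neg at hcon
      apply hwC
      refine (hsd w).mpr fun y hy => ?_
      rcases hwvk y with h | h
      · exact h
      · exact absurd h (hcon y hy)
    obtain ⟨u, huC, huk⟩ := hexu
    have hCt : ((evenPart C w ⊔ AddSubgroup.closure {w} : AddSubgroup _) : Set (Fin n → ZMod (2*k)))
        = (evenPart C w : Set _) ∪ (fun v => v + w) '' (evenPart C w : Set _) := by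
      ext x
      simp only [Set.mem_union, Set.mem_image, SetLike.mem_coe]
      rw [hmem]
      constructor
      · rintro ⟨v, hv, rfl | rfl⟩
        · exact Or.inl hv
        · exact Or.inr ⟨v, hv, rfl⟩
      · rintro (h | ⟨v, hv, rfl⟩)
        · exact ⟨x, h, Or.inl rfl⟩
        · exact ⟨v, hv, Or.inr rfl⟩
    have hC : (C : Set (Fin n → ZMod (2*k)))
        = (evenPart C w : Set _) ∪ (fun v => v + u) '' (evenPart C w : Set _) := by
      ext x
      simp only [Set.mem_union, Set.mem_image, SetLike.mem_coe]
      constructor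
      · intro hx
        rcases hwvk x with h0 | hkx
        · exact Or.inl ((hmemE x).2 ⟨hx, h0⟩)
        · right
          refine ⟨x - u, (hmemE _).2 ⟨C.sub_mem hx huC, ?_⟩, by rw [sub_add_cancel]⟩
          rw [innerZ_sub_right', hkx, huk, sub_self]
      · rintro (h | ⟨v, hv, rfl⟩)
        · exact ((hmemE x).1 h).1
        · exact C.add_mem ((hmemE v).1 hv).1 huC
    have hdisj1 : Disjoint (evenPart C w : Set (Fin n → ZMod (2*k)))
        ((fun v => v + w) '' (evenPart C w : Set _)) := by
      rw [Set.disjoint_left]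
      rintro x hx ⟨v, hv, rfl⟩
      rw [SetLike.mem_coe, hmemE] at hx hv
      exact hwC (by simpa using C.sub_mem hx.1 hv.1)
    have hdisj2 : Disjoint (evenPart C w : Set (Fin n → ZMod (2*k)))
        ((fun v => v + u) '' (evenPart C w : Set _)) := by
      rw [Set.disjoint_left]
      rintro x hx ⟨v, hv, rfl⟩
      rw [SetLike.mem_coe, hmemE] at hx hv
      apply hk0
      have h := hx.2
      rw [innerZ_add_right', hv.2, huk, zero_add] at h
      exact h
    have hinjw : Function.Injective (fun v : Fin n → ZMod (2*k) => v + w) :=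
      fun a b h => by simpa using congrArg (fun z => z - w) h
    have hinju : Function.Injective (fun v : Fin n → ZMod (2*k) => v + u) :=
      fun a b h => by simpa using congrArg (fun z => z - u) h
    calc Nat.card (evenPart C w ⊔ AddSubgroup.closure {w} : AddSubgroup (Fin n → ZMod (2 * k)))
        = ((evenPart C w ⊔ AddSubgroup.closure {w} : AddSubgroup _) : Set (Fin n → ZMod (2*k))).ncard :=
          Nat.card_coe_set_eq _
      _ = (evenPart C w : Set (Fin n → ZMod (2*k))).ncard
          + ((fun v => v + w) '' (evenPart C w : Set _)).ncard := by
          rw [hCt]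
          exact Set.ncard_union_eq hdisj1 (Set.toFinite _) (Set.toFinite _)
      _ = (evenPart C w : Set (Fin n → ZMod (2*k))).ncard
          + (evenPart C w : Set (Fin n → ZMod (2*k))).ncard := by
          rw [Set.ncard_image_of_injective _ hinjw]
      _ = (evenPart C w : Set (Fin n → ZMod (2*k))).ncard
          + ((fun v => v + u) '' (evenPart C w : Set _)).ncard := by
          rw [Set.ncard_image_of_injective _ hinju]
      _ = (C : Set (Fin n → ZMod (2*k))).ncard := by
          rw [hC]
          exact (Set.ncard_union_eq hdisj2 (Set.toFinite _) (Set.toFinite _)).symm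
      _ = Nat.card C := (Nat.card_coe_set_eq _).symm
end

section
/- Let m ≥ 2 and let C be a Type II Z_{2^m}-code of length n having a generator matrix in standard form of type (k_1,…,k_m); set K = k_1+⋯+k_m. Let w ∈ (Z/2^m)^n \ C be a vector all of whose coordinates lie in {0, 2^{m−1}}, with n_{2^{m−1}}(w) even in case m = 2. Then there exists a unique codeword c ∈ C all of whose coordinates lie in {0, 2^{m−1}} such that c_i = w_i for all i ∈ {1,…,K}; moreover, setting w′ = w − c, the vector w′ lies in (Z/2^m)^n \ C, has all coordinates in {0, 2^{m−1}}, is zero on the first K coordinates, has n_{2^{m−1}}(w′) even in case m = 2, and satisfies {v ∈ C : ⟨w,v⟩ = 0} = {v ∈ C : ⟨w′,v⟩ = 0} and {v ∈ C : ⟨w,v⟩ = 0} + ⟨w⟩ = {v ∈ C : ⟨w′,v⟩ = 0} + ⟨w′⟩. -/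
open Finset

section Aux

lemma psum_mono {m : ℕ} (kv : Fin m → ℕ) : Monotone (psum kv) := by
  intro a b hab
  exact Finset.sum_le_sum_of_subset (Finset.range_subset_range.2 hab)

lemma blkEx {m : ℕ} (kv : Fin m → ℕ) (M t : ℕ) (ht : t < psum kv M) :
    ∃ j, j < M ∧ psum kv j ≤ t ∧ t < psum kv (j+1) := by
  induction M with
  | zero => simp [psum] at ht
  | succ M IH =>
    by_cases h : t < psum kv M
    · obtain ⟨j, h1, h2, h3⟩ := IH h
      exact ⟨j, Nat.lt_succ_of_lt h1, h2, h3⟩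
    · exact ⟨M, Nat.lt_succ_self M, not_lt.1 h, ht⟩

/-- The block index of a row of a standard-form generator matrix. -/
noncomputable def blk {m : ℕ} (kv : Fin m → ℕ) (r : Fin (psum kv m)) : ℕ :=
  (blkEx kv m r r.2).choose

lemma blk_lt {m : ℕ} (kv : Fin m → ℕ) (r : Fin (psum kv m)) : blk kv r < m :=
  (blkEx kv m r r.2).choose_spec.1

lemma blk_le {m : ℕ} (kv : Fin m → ℕ) (r : Fin (psum kv m)) :
    psum kv (blk kv r) ≤ (r : ℕ) :=
  (blkEx kv m r r.2).choose_spec.2.1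

lemma lt_blk_succ {m : ℕ} (kv : Fin m → ℕ) (r : Fin (psum kv m)) :
    (r : ℕ) < psum kv (blk kv r + 1) :=
  (blkEx kv m r r.2).choose_spec.2.2

variable {m n : ℕ} {kv : Fin m → ℕ} {G : Fin (psum kv m) → Fin n → ZMod (2 ^ m)}

/-- Row `r` viewed as a column index. -/
def col (hKn : psum kv m ≤ n) (r : Fin (psum kv m)) : Fin n :=
  ⟨(r : ℕ), lt_of_lt_of_le r.2 hKn⟩

/-- Every entry of row `r` is a multiple of `2 ^ blk r`. -/
lemma row_mult (hSF : StandardForm kv G) (r : Fin (psum kv m)) (c : Fin n) :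
    ∃ b, G r c = 2 ^ (blk kv r) * b := by
  have hpair := hSF.2 ⟨blk kv r, blk_lt kv r⟩ r (blk_le kv r) (lt_blk_succ kv r) c
  by_cases hc : (c : ℕ) < psum kv m
  · obtain ⟨l, hl, hcl1, hcl2⟩ := blkEx kv m c hc
    rcases lt_trichotomy l (blk kv r) with h | h | h
    · refine ⟨0, ?_⟩
      rw [mul_zero]
      exact (hpair.1 ⟨l, hl⟩ hcl1 hcl2).1 h
    · refine ⟨if (r : ℕ) = (c : ℕ) then 1 else 0, ?_⟩
      have := (hpair.1 ⟨l, hl⟩ hcl1 hcl2).2 (by simp [Fin.ext_iff, h])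
      rw [this]
      split <;> ring
    · exact hpair.2 (Or.inr ⟨⟨l, hl⟩, h, hcl1, hcl2⟩)
  · exact hpair.2 (Or.inl (not_lt.1 hc))

/-- Diagonal-block entries. -/
lemma row_diag (hSF : StandardForm kv G) (hKn : psum kv m ≤ n)
    (r r' : Fin (psum kv m)) (h : blk kv r' = blk kv r) :
    G r' (col hKn r) = if r' = r then (2 : ZMod (2 ^ m)) ^ (blk kv r) else 0 := by
  have hpair := hSF.2 ⟨blk kv r', blk_lt kv r'⟩ r' (blk_le kv r') (lt_blk_succ kv r')
    (col hKn r)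
  have hc1 : psum kv ((⟨blk kv r', blk_lt kv r'⟩ : Fin m) : ℕ) ≤ ((col hKn r : Fin n) : ℕ) := by
    simpa [col, h] using blk_le kv r
  have hc2 : ((col hKn r : Fin n) : ℕ) < psum kv (((⟨blk kv r', blk_lt kv r'⟩ : Fin m) : ℕ) + 1) := by
    simpa [col, h] using lt_blk_succ kv r
  have := (hpair.1 ⟨blk kv r', blk_lt kv r'⟩ hc1 hc2).2 rfl
  rw [this]
  rcases eq_or_ne r' r with he | he
  · subst he
    have hc : (r' : ℕ) = ((col hKn r' : Fin n) : ℕ) := rfl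
    rw [if_pos hc]
    simp
  · have hc : ¬ ((r' : ℕ) = ((col hKn r : Fin n) : ℕ)) := fun hc => he (Fin.ext hc)
    rw [if_neg hc, if_neg he]

/-- Rows in later blocks vanish at earlier-block columns. -/
lemma row_later_zero (hSF : StandardForm kv G) (hKn : psum kv m ≤ n)
    (r r' : Fin (psum kv m)) (h : blk kv r < blk kv r') :
    G r' (col hKn r) = 0 := by
  have hpair := hSF.2 ⟨blk kv r', blk_lt kv r'⟩ r' (blk_le kv r') (lt_blk_succ kv r')
    (col hKn r)
  have hc1 : psum kv ((⟨blk kv r, blk_lt kv r⟩ : Fin m) : ℕ) ≤ ((col hKn r : Fin n) : ℕ) := by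
    simpa [col] using blk_le kv r
  have hc2 : ((col hKn r : Fin n) : ℕ) < psum kv (((⟨blk kv r, blk_lt kv r⟩ : Fin m) : ℕ) + 1) := by
    simpa [col] using lt_blk_succ kv r
  exact (hpair.1 ⟨blk kv r, blk_lt kv r⟩ hc1 hc2).1 h

/-- Master lemma: a linear combination of the rows vanishing on the first `K`
coordinates has all its summands zero. -/
lemma master (hSF : StandardForm kv G) (a : Fin (psum kv m) → ZMod (2 ^ m))
    (hx : ∀ i : Fin n, (i : ℕ) < psum kv m → (∑ r, a r • G r) i = 0) :
    ∀ r, (2 : ZMod (2 ^ m)) ^ (blk kv r) * a r = 0 ∧ a r • G r = 0 := by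
  have hKn := hSF.1
  have key : ∀ J, ∀ r, blk kv r = J →
      (2 : ZMod (2 ^ m)) ^ (blk kv r) * a r = 0 ∧ a r • G r = 0 := by
    intro J
    induction J using Nat.strong_induction_on with
    | _ J IH =>
      intro r hr
      have hxr := hx (col hKn r) (by simpa [col] using r.2)
      rw [Finset.sum_apply] at hxr
      have hsum : ∑ r', (a r' • G r') (col hKn r) = a r * G r (col hKn r) := by
        apply Finset.sum_eq_single r
        · intro r' _ hne
          rcases lt_trichotomy (blk kv r') J with h | h | h
          · have := (IH (blk kv r') h r' rfl).2
            rw [this]; rfl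
          · have : G r' (col hKn r) = 0 := by
              rw [row_diag hSF hKn r r' (by rw [h, hr]), if_neg hne]
            simp [this]
          · have : G r' (col hKn r) = 0 := row_later_zero hSF hKn r r' (hr ▸ h)
            simp [this]
        · intro h; exact absurd (Finset.mem_univ r) h
      have hdiagval : G r (col hKn r) = (2 : ZMod (2 ^ m)) ^ (blk kv r) := by
        rw [row_diag hSF hKn r r rfl, if_pos rfl]
      rw [hsum, hdiagval] at hxr
      have h2 : (2 : ZMod (2 ^ m)) ^ (blk kv r) * a r = 0 := by
        rw [mul_comm]; exact hxr
      refine ⟨h2, ?_⟩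
      funext c
      obtain ⟨b, hb⟩ := row_mult hSF r c
      show a r * G r c = 0
      rw [hb, ← mul_assoc, mul_comm (a r), h2, zero_mul]
  intro r
  exact key (blk kv r) r rfl

/-- Every element of the closure of the rows is a linear combination. -/
lemma mem_comb {C : AddSubgroup (Fin n → ZMod (2 ^ m))}
    (hgen : C = AddSubgroup.closure (Set.range G)) {x : Fin n → ZMod (2 ^ m)}
    (hx : x ∈ C) : ∃ a : Fin (psum kv m) → ZMod (2 ^ m), x = ∑ r, a r • G r := by
  have h1 : C ≤ (Submodule.span (ZMod (2 ^ m)) (Set.range G)).toAddSubgroup := by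
    rw [hgen]
    exact AddSubgroup.closure_le _ |>.2 (fun y hy => Submodule.subset_span hy)
  have h2 := h1 hx
  rw [Submodule.mem_toAddSubgroup] at h2
  obtain ⟨a, ha⟩ := (Submodule.mem_span_range_iff_exists_fun _).1 h2
  exact ⟨a, ha.symm⟩

/-- ZMod-scalar multiples stay in an additive subgroup. -/
lemma zsmul_mem' {N : ℕ} [NeZero N] {C : AddSubgroup (Fin n → ZMod N)}
    {x : Fin n → ZMod N} (hx : x ∈ C) (z : ZMod N) : z • x ∈ C := by
  have h : z • x = z.val • x := by
    rw [← Nat.cast_smul_eq_nsmul (ZMod N) z.val x, ZMod.natCast_val, ZMod.cast_id]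
  rw [h]
  exact AddSubgroup.nsmul_mem C hx z.val

lemma two_pow_m_zero : ((2 : ZMod (2 ^ m)) ^ m) = 0 := by
  have := ZMod.natCast_self (2 ^ m)
  push_cast at this
  exact this

lemma half_ne_zero (hm1 : 1 ≤ m) : ((2 : ZMod (2 ^ m)) ^ (m - 1)) ≠ 0 := by
  haveI : NeZero (2 ^ m) := ⟨pow_ne_zero _ two_ne_zero⟩
  intro h
  have h2 : ((2 ^ (m - 1) : ℕ) : ZMod (2 ^ m)) = 0 := by push_cast; exact h
  rw [ZMod.natCast_eq_zero_iff] at h2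
  have := (Nat.pow_dvd_pow_iff_le_right Nat.one_lt_two).mp h2
  omega

lemma half_add_half (hm1 : 1 ≤ m) : ((2 : ZMod (2 ^ m)) ^ (m - 1)) + 2 ^ (m - 1) = 0 := by
  rw [← two_mul, ← pow_succ', Nat.sub_add_cancel hm1]
  exact two_pow_m_zero

lemma half_mul (hm1 : 1 ≤ m) (a : ZMod (2 ^ m)) :
    (2 : ZMod (2 ^ m)) ^ (m - 1) * a = 0 ∨ (2 : ZMod (2 ^ m)) ^ (m - 1) * a = 2 ^ (m - 1) := by
  haveI : NeZero (2 ^ m) := ⟨pow_ne_zero _ two_ne_zero⟩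
  have ha : ((a.val : ℕ) : ZMod (2 ^ m)) = a := by rw [ZMod.natCast_val, ZMod.cast_id]
  have key : (2 : ZMod (2 ^ m)) ^ (m - 1) * a = ((2 ^ (m - 1) * a.val : ℕ) : ZMod (2 ^ m)) := by
    push_cast [ha]; ring
  have hpow : (2 : ℕ) ^ m = 2 ^ (m - 1) * 2 := by rw [← pow_succ, Nat.sub_add_cancel hm1]
  rcases Nat.even_or_odd a.val with ⟨t, ht⟩ | ⟨t, ht⟩
  · left
    rw [key, ZMod.natCast_eq_zero_iff]
    exact ⟨t, by rw [ht, hpow]; ring⟩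
  · right
    rw [key, ht]
    have : 2 ^ (m - 1) * (2 * t + 1) = 2 ^ m * t + 2 ^ (m - 1) := by rw [hpow]; ring
    rw [this]
    push_cast
    rw [two_pow_m_zero]
    ring

lemma half_mul_half (hm : 2 ≤ m) :
    (2 : ZMod (2 ^ m)) ^ (m - 1) * 2 ^ (m - 1) = 0 := by
  rw [← pow_add]
  have h : (m - 1) + (m - 1) = m + (m - 2) := by omega
  rw [h, pow_add, two_pow_m_zero, zero_mul]

/-- Reduction of a half-valued element to `ZMod 2`. -/
def toF2 {N : ℕ} (x : ZMod N) : ZMod 2 := if x = 0 then 0 else 1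

lemma toF2_inj (hm1 : 1 ≤ m) (x y : ZMod (2 ^ m))
    (hx : x = 0 ∨ x = 2 ^ (m - 1)) (hy : y = 0 ∨ y = 2 ^ (m - 1))
    (h : toF2 x = toF2 y) : x = y := by
  have hne := half_ne_zero (m := m) hm1
  rcases hx with hx | hx <;> rcases hy with hy | hy <;> subst hx <;> subst hy <;>
    simp [toF2, hne] at h ⊢

/-- The codeword associated to a binary choice vector. -/
noncomputable def EF (G : Fin (psum kv m) → Fin n → ZMod (2 ^ m))
    (b : Fin (psum kv m) → ZMod 2) : Fin n → ZMod (2 ^ m) :=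
  ∑ r, ((((b r).val : ZMod (2 ^ m)) * 2 ^ (m - 1 - blk kv r)) • G r)

lemma EF_term (hSF : StandardForm kv G) (z : ZMod (2 ^ m)) (r : Fin (psum kv m)) (c : Fin n) :
    ∃ bc, z * 2 ^ (m - 1 - blk kv r) * G r c = 2 ^ (m - 1) * (z * bc) := by
  obtain ⟨bc, hbc⟩ := row_mult hSF r c
  refine ⟨bc, ?_⟩
  rw [hbc]
  have hpows : (2 : ZMod (2 ^ m)) ^ (m - 1 - blk kv r) * 2 ^ (blk kv r) = 2 ^ (m - 1) := by
    rw [← pow_add]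
    congr 1
    have := blk_lt kv r
    omega
  rw [← hpows]
  ring

lemma EF_entry (hm1 : 1 ≤ m) (hSF : StandardForm kv G) (b : Fin (psum kv m) → ZMod 2)
    (c : Fin n) : EF G b c = 0 ∨ EF G b c = 2 ^ (m - 1) := by
  have hc : EF G b c = ∑ r, (((b r).val : ZMod (2 ^ m)) * 2 ^ (m - 1 - blk kv r)) * G r c := by
    rw [EF, Finset.sum_apply]; rfl
  rw [hc]
  apply Finset.sum_induction _ (fun x => x = 0 ∨ x = 2 ^ (m - 1))
  · rintro a b (ha | ha) (hb | hb) <;> rw [ha, hb] <;>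
      simp [half_add_half hm1]
  · left; rfl
  · intro r _
    obtain ⟨bc, hbc⟩ := EF_term hSF ((b r).val : ZMod (2 ^ m)) r c
    rw [hbc]
    exact half_mul hm1 _

lemma EF_mem {C : AddSubgroup (Fin n → ZMod (2 ^ m))}
    (hgen : C = AddSubgroup.closure (Set.range G)) (b : Fin (psum kv m) → ZMod 2) :
    EF G b ∈ C := by
  haveI : NeZero (2 ^ m) := ⟨pow_ne_zero _ two_ne_zero⟩
  apply AddSubgroup.sum_mem
  intro r _
  apply zsmul_mem'
  rw [hgen]
  exact AddSubgroup.subset_closure ⟨r, rfl⟩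

lemma lemZ {C : AddSubgroup (Fin n → ZMod (2 ^ m))} (hSF : StandardForm kv G)
    (hgen : C = AddSubgroup.closure (Set.range G)) {x : Fin n → ZMod (2 ^ m)}
    (hx : x ∈ C) (hz : ∀ i : Fin n, (i : ℕ) < psum kv m → x i = 0) : x = 0 := by
  obtain ⟨a, rfl⟩ := mem_comb hgen hx
  exact Finset.sum_eq_zero fun r _ => (master hSF a hz r).2

lemma psi_inj (hm1 : 1 ≤ m) (hSF : StandardForm kv G) :
    Function.Injective (fun (b : Fin (psum kv m) → ZMod 2)
      (r : Fin (psum kv m)) => toF2 (EF G b (col hSF.1 r))) := by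
  intro b b' hbb
  simp only at hbb
  have hag : ∀ i : Fin n, (i : ℕ) < psum kv m → EF G b i = EF G b' i := by
    intro i hi
    have hcoli : i = col hSF.1 ⟨(i : ℕ), hi⟩ := Fin.ext rfl
    rw [hcoli]
    exact toF2_inj hm1 _ _ (EF_entry hm1 hSF b _) (EF_entry hm1 hSF b' _)
      (congrFun hbb ⟨(i : ℕ), hi⟩)
  set a : Fin (psum kv m) → ZMod (2 ^ m) := fun r =>
    ((b r).val : ZMod (2 ^ m)) * 2 ^ (m - 1 - blk kv r)
      - ((b' r).val : ZMod (2 ^ m)) * 2 ^ (m - 1 - blk kv r) with ha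
  have hsumx : (∑ r, a r • G r) = EF G b - EF G b' := by
    rw [EF, EF, ← Finset.sum_sub_distrib]
    exact Finset.sum_congr rfl fun r _ => by rw [ha, sub_smul]
  have hx : ∀ i : Fin n, (i : ℕ) < psum kv m → (∑ r, a r • G r) i = 0 := by
    intro i hi
    rw [hsumx]
    show EF G b i - EF G b' i = 0
    rw [hag i hi, sub_self]
  have hmast := master hSF a hx
  funext r
  have h0 := (hmast r).1
  have hpows : (2 : ZMod (2 ^ m)) ^ (blk kv r) * 2 ^ (m - 1 - blk kv r) = 2 ^ (m - 1) := by
    rw [← pow_add]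
    congr 1
    have := blk_lt kv r
    omega
  have h0' : (2 : ZMod (2 ^ m)) ^ (m - 1)
      * (((b r).val : ZMod (2 ^ m)) - ((b' r).val : ZMod (2 ^ m))) = 0 := by
    rw [← h0, ha, ← hpows]
    ring
  have hz2 : ∀ z : ZMod 2, z = 0 ∨ z = 1 := by decide
  have hv0 : ((0 : ZMod 2)).val = 0 := rfl
  have hv1 : ((1 : ZMod 2)).val = 1 := rfl
  rcases hz2 (b r) with h1 | h1 <;> rcases hz2 (b' r) with h2 | h2 <;>
    rw [h1, h2] <;> rw [h1, h2] at h0'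
  · exfalso
    rw [hv0, hv1] at h0'
    simp only [Nat.cast_zero, Nat.cast_one, zero_sub, mul_neg, neg_eq_zero, mul_one] at h0'
    exact half_ne_zero hm1 h0'
  · exfalso
    rw [hv0, hv1] at h0'
    simp only [Nat.cast_zero, Nat.cast_one, sub_zero, mul_one] at h0'
    exact half_ne_zero hm1 h0' 

end Aux

/-- the choice of `w` in the doubling method can be reduced to a
vector `w' = w - c` vanishing on the first `K` coordinates, yielding the same
subcode `C₀` and the same doubled code. -/
theorem reduce_to_zero_prefix {m n : ℕ} (hm : 2 ≤ m) (kv : Fin m → ℕ)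
    (G : Fin (psum kv m) → Fin n → ZMod (2 ^ m)) (hSF : StandardForm kv G)
    (C : AddSubgroup (Fin n → ZMod (2 ^ m)))
    (hgen : C = AddSubgroup.closure (Set.range G))
    (hsd : IsSelfDual C) (hT2 : ∀ x ∈ C, 2 ^ (m + 1) ∣ euclWt x)
    (w : Fin n → ZMod (2 ^ m)) (hwC : w ∉ C)
    (hcoord : ∀ i, w i = 0 ∨ w i = (2 ^ (m - 1) : ZMod (2 ^ m)))
    (hpar : m = 2 → 2 ∣ cntEq (2 ^ (m - 1) : ZMod (2 ^ m)) w) :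
    (∃! c : Fin n → ZMod (2 ^ m),
      c ∈ C ∧ (∀ i, c i = 0 ∨ c i = (2 ^ (m - 1) : ZMod (2 ^ m))) ∧
      ∀ i : Fin n, (i : ℕ) < psum kv m → c i = w i) ∧
    ∀ c : Fin n → ZMod (2 ^ m),
      (c ∈ C ∧ (∀ i, c i = 0 ∨ c i = (2 ^ (m - 1) : ZMod (2 ^ m))) ∧
        ∀ i : Fin n, (i : ℕ) < psum kv m → c i = w i) →
      w - c ∉ C ∧
      (∀ i, (w - c) i = 0 ∨ (w - c) i = (2 ^ (m - 1) : ZMod (2 ^ m))) ∧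
      (∀ i : Fin n, (i : ℕ) < psum kv m → (w - c) i = 0) ∧
      (m = 2 → 2 ∣ cntEq (2 ^ (m - 1) : ZMod (2 ^ m)) (w - c)) ∧
      evenPart C w = evenPart C (w - c) ∧
      evenPart C w ⊔ AddSubgroup.closure {w}
        = evenPart C (w - c) ⊔ AddSubgroup.closure {w - c} := by
  haveI : NeZero (2 ^ m) := ⟨pow_ne_zero _ two_ne_zero⟩
  have hm1 : 1 ≤ m := by omega
  obtain ⟨b, hb⟩ := (Finite.injective_iff_surjective.mp (psi_inj hm1 hSF))
    (fun r => toF2 (w (col hSF.1 r)))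
  have hc₀C : EF G b ∈ C := EF_mem hgen b
  have hc₀ent : ∀ i, EF G b i = 0 ∨ EF G b i = 2 ^ (m - 1) := fun i => EF_entry hm1 hSF b i
  have hc₀match : ∀ i : Fin n, (i : ℕ) < psum kv m → EF G b i = w i := by
    intro i hi
    have hcoli : i = col hSF.1 ⟨(i : ℕ), hi⟩ := Fin.ext rfl
    apply toF2_inj hm1 _ _ (hc₀ent i) (hcoord i)
    rw [hcoli]
    exact congrFun hb ⟨(i : ℕ), hi⟩
  have huniq : ∀ y, (y ∈ C ∧ (∀ i, y i = 0 ∨ y i = 2 ^ (m - 1)) ∧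
      ∀ i : Fin n, (i : ℕ) < psum kv m → y i = w i) → y = EF G b := by
    rintro y ⟨hyC, hyent, hymatch⟩
    have hd : y - EF G b ∈ C := AddSubgroup.sub_mem C hyC hc₀C
    have hz : ∀ i : Fin n, (i : ℕ) < psum kv m → (y - EF G b) i = 0 := by
      intro i hi
      show y i - EF G b i = 0
      rw [hymatch i hi, hc₀match i hi, sub_self]
    exact sub_eq_zero.mp (lemZ hSF hgen hd hz)
  refine ⟨⟨EF G b, ⟨hc₀C, hc₀ent, hc₀match⟩, huniq⟩, ?_⟩
  rintro c ⟨hcC, hcent, hcmatch⟩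
  have hwsubC : w - c ∉ C := by
    intro h
    have := C.add_mem h hcC
    rw [sub_add_cancel] at this
    exact hwC this
  have hent' : ∀ i, (w - c) i = 0 ∨ (w - c) i = 2 ^ (m - 1) := by
    intro i
    show w i - c i = 0 ∨ w i - c i = 2 ^ (m - 1)
    rcases hcoord i with h1 | h1 <;> rcases hcent i with h2 | h2 <;> rw [h1, h2]
    · left; exact sub_self _
    · right
      rw [zero_sub]
      exact neg_eq_of_add_eq_zero_left (half_add_half hm1)
    · right; rw [sub_zero]
    · left; exact sub_self _
  have hzero' : ∀ i : Fin n, (i : ℕ) < psum kv m → (w - c) i = 0 := by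
    intro i hi
    show w i - c i = 0
    rw [hcmatch i hi, sub_self]
  have hinner_sub : ∀ v, innerZ (w - c) v = innerZ w v - innerZ c v := by
    intro v
    simp [innerZ, sub_mul, Finset.sum_sub_distrib]
  have hcperp : ∀ v ∈ C, innerZ c v = 0 := (hsd c).1 hcC
  have hmemEP : ∀ (u v : Fin n → ZMod (2 ^ m)),
      v ∈ evenPart C u ↔ v ∈ C ∧ innerZ u v = 0 := fun u v => Iff.rfl
  have heven : evenPart C w = evenPart C (w - c) := by
    ext v
    rw [hmemEP, hmemEP]
    constructor
    · rintro ⟨hvC, h0⟩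
      exact ⟨hvC, by rw [hinner_sub, h0, hcperp v hvC, sub_zero]⟩
    · rintro ⟨hvC, h0⟩
      refine ⟨hvC, ?_⟩
      have hs := hinner_sub v
      rw [hcperp v hvC, sub_zero] at hs
      rw [← hs]
      exact h0
  have hwc : innerZ w c = 0 := by
    rw [innerZ]
    apply Finset.sum_eq_zero
    intro i _
    rcases hcoord i with h1 | h1 <;> rcases hcent i with h2 | h2 <;> rw [h1, h2]
    · rw [mul_zero]
    · rw [zero_mul]
    · rw [mul_zero]
    · exact half_mul_half hm
  have hcD : c ∈ evenPart C w := (hmemEP w c).2 ⟨hcC, hwc⟩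
  refine ⟨hwsubC, hent', hzero', ?_, heven, ?_⟩
  · -- parity in case m = 2
    intro hm2
    subst hm2
    have hdvd := hT2 c hcC
    have hwt : euclWt c = (Finset.univ.filter fun j => c j = (2 ^ (2 - 1) : ZMod (2 ^ 2))).card * 4 := by
      rw [euclWt]
      have hterm : ∀ i : Fin n, min ((c i).val ^ 2) ((2 ^ 2 - (c i).val) ^ 2)
          = if c i = (2 ^ (2 - 1) : ZMod (2 ^ 2)) then 4 else 0 := by
        intro i
        rcases hcent i with h | h <;> rw [h] <;> decide
      rw [Finset.sum_congr rfl (fun i _ => hterm i), ← Finset.sum_filter,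
        Finset.sum_const, smul_eq_mul]
    rw [hwt] at hdvd
    have hcnt_c : 2 ∣ cntEq (2 ^ (2 - 1) : ZMod (2 ^ 2)) c := by
      rw [cntEq]
      omega
    have hcast : ∀ x : Fin n → ZMod (2 ^ 2),
        ((cntEq (2 ^ (2 - 1) : ZMod (2 ^ 2)) x : ℕ) : ZMod 2)
          = ∑ i, (if x i = (2 ^ (2 - 1) : ZMod (2 ^ 2)) then (1 : ZMod 2) else 0) := by
      intro x
      rw [cntEq, Finset.card_eq_sum_ones, Nat.cast_sum, Finset.sum_filter]
      push_cast
      rfl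
    have h0w : ((cntEq (2 ^ (2 - 1) : ZMod (2 ^ 2)) w : ℕ) : ZMod 2) = 0 :=
      (ZMod.natCast_eq_zero_iff _ 2).2 (hpar rfl)
    have h0c : ((cntEq (2 ^ (2 - 1) : ZMod (2 ^ 2)) c : ℕ) : ZMod 2) = 0 :=
      (ZMod.natCast_eq_zero_iff _ 2).2 hcnt_c
    have hkey : ((cntEq (2 ^ (2 - 1) : ZMod (2 ^ 2)) (w - c) : ℕ) : ZMod 2) = 0 := by
      rw [hcast]
      have hterm : ∀ i : Fin n,
          (if (w - c) i = (2 ^ (2 - 1) : ZMod (2 ^ 2)) then (1 : ZMod 2) else 0)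
            = (if w i = (2 ^ (2 - 1) : ZMod (2 ^ 2)) then (1 : ZMod 2) else 0)
              + (if c i = (2 ^ (2 - 1) : ZMod (2 ^ 2)) then (1 : ZMod 2) else 0) := by
        intro i
        have hsub : (w - c) i = w i - c i := rfl
        rcases hcoord i with h1 | h1 <;> rcases hcent i with h2 | h2 <;>
          rw [hsub, h1, h2] <;> decide
      rw [Finset.sum_congr rfl (fun i _ => hterm i), Finset.sum_add_distrib,
        ← hcast, ← hcast, h0w, h0c, add_zero]
    exact (ZMod.natCast_eq_zero_iff _ 2).1 hkey
  · -- the doubled codes agree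
    rw [← heven]
    have hwmem : w ∈ AddSubgroup.closure {w} := AddSubgroup.subset_closure rfl
    have hwcmem : w - c ∈ AddSubgroup.closure {w - c} := AddSubgroup.subset_closure rfl
    apply le_antisymm
    · refine sup_le le_sup_left ?_
      rw [AddSubgroup.closure_le]
      rintro x hx
      rw [Set.mem_singleton_iff] at hx
      rw [hx]
      have h1 : w - c ∈ evenPart C w ⊔ AddSubgroup.closure {w - c} :=
        AddSubgroup.mem_sup_right hwcmem
      have h2 : c ∈ evenPart C w ⊔ AddSubgroup.closure {w - c} :=
        AddSubgroup.mem_sup_left hcD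
      have h3 := AddSubgroup.add_mem _ h1 h2
      rw [sub_add_cancel] at h3
      exact h3
    · refine sup_le le_sup_left ?_
      rw [AddSubgroup.closure_le]
      rintro x hx
      rw [Set.mem_singleton_iff] at hx
      rw [hx]
      have h1 : w ∈ evenPart C w ⊔ AddSubgroup.closure {w} :=
        AddSubgroup.mem_sup_right hwmem
      have h2 : c ∈ evenPart C w ⊔ AddSubgroup.closure {w} :=
        AddSubgroup.mem_sup_left hcD
      exact AddSubgroup.sub_mem _ h1 h2
end

section
/- Let k ≥ 1 and n ≥ 1. For all x, y ∈ (Z/2k)^n, the Euclidean weights satisfy the congruence wt_E(x+y) ≡ wt_E(x) + wt_E(y) + 2·r(⟨x,y⟩) (mod 4k), where ⟨x,y⟩ = Σ_{i=1}^n x_i y_i ∈ Z/2k and r(c) ∈ {0,…,2k−1} denotes the standard integer representative of c ∈ Z/2k. -/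
open Finset

/-! Integers congruent modulo `2k` have squares congruent modulo `4k`. Hence, modulo `4k`, the
Euclidean weight `min (v ^ 2, (2k - v) ^ 2)` of a coordinate with representative `v` is just
`v ^ 2`, and the representative of `a + b` may be replaced by `v_a + v_b`; expanding
`(v_a + v_b) ^ 2` leaves the cross term `2 ∑ v_a v_b`, which is `2 r(⟨x, y⟩)` modulo
`2 · 2k`. -/

theorem Int.sq_modEq_sq_of_modEq_two_mul {a b k : ℤ} (h : a ≡ b [ZMOD 2 * k]) :
    a ^ 2 ≡ b ^ 2 [ZMOD 4 * k] := by
  obtain ⟨t, rfl⟩ : ∃ t, b = a + 2 * k * t := ⟨(b - a) / (2 * k), by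
    rw [Int.mul_ediv_cancel' h.dvd]; ring⟩
  exact Int.modEq_iff_dvd.mpr ⟨a * t + k * t ^ 2, by ring⟩

theorem ZMod.intCast_val_modEq_iff {N : ℕ} [NeZero N] {a : ZMod N} {z : ℤ} :
    (a.val : ℤ) ≡ z [ZMOD N] ↔ a = z := by
  rw [← ZMod.intCast_eq_intCast_iff, Int.cast_natCast, ZMod.natCast_zmod_val]

section EvenModulus

variable {k n : ℕ}

theorem min_sq_val_modEq [NeZero k] (a : ZMod (2 * k)) :
    ((min (a.val ^ 2) ((2 * k - a.val) ^ 2) : ℕ) : ℤ) ≡ (a.val : ℤ) ^ 2 [ZMOD 4 * k] := by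
  have hlt : a.val ≤ 2 * k := (ZMod.val_lt a).le
  have hflip : ((2 * k - a.val : ℕ) : ℤ) ^ 2 ≡ (a.val : ℤ) ^ 2 [ZMOD 4 * k] := by
    rw [Nat.cast_sub hlt, ← neg_sq (a.val : ℤ)]
    exact Int.sq_modEq_sq_of_modEq_two_mul
      (Int.modEq_iff_dvd.mpr ⟨-1, by push_cast; ring⟩)
  rcases min_cases (a.val ^ 2) ((2 * k - a.val) ^ 2) with ⟨h, -⟩ | ⟨h, -⟩
  · rw [h]; push_cast; rfl
  · rw [h]; push_cast at hflip ⊢; exact hflip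

theorem euclWt_modEq_sum_sq [NeZero k] (z : Fin n → ZMod (2 * k)) :
    (euclWt z : ℤ) ≡ ∑ i, ((z i).val : ℤ) ^ 2 [ZMOD 4 * k] := by
  rw [euclWt, Nat.cast_sum]
  exact Int.ModEq.sum fun i _ => min_sq_val_modEq (z i)

end EvenModulus

section

variable {N n : ℕ} [NeZero N]

theorem ZMod.val_add_modEq (a b : ZMod N) : ((a + b).val : ℤ) ≡ a.val + b.val [ZMOD N] := by
  rw [ZMod.intCast_val_modEq_iff]
  push_cast
  simp only [ZMod.natCast_zmod_val]

theorem innerZ_val_modEq (x y : Fin n → ZMod N) :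
    ((innerZ x y).val : ℤ) ≡ ∑ i, ((x i).val : ℤ) * (y i).val [ZMOD N] := by
  rw [ZMod.intCast_val_modEq_iff]
  push_cast
  simp only [ZMod.natCast_zmod_val, innerZ]

end

theorem euclWt_add_congr_general {k n : ℕ} (hk : 1 ≤ k)
    (x y : Fin n → ZMod (2 * k)) :
    euclWt (x + y) ≡ euclWt x + euclWt y + 2 * (innerZ x y).val [MOD 4 * k] := by
  have : NeZero k := ⟨by omega⟩
  rw [← Int.natCast_modEq_iff]
  push_cast
  have hcross : 2 * ∑ i, ((x i).val : ℤ) * (y i).val ≡ 2 * (innerZ x y).val [ZMOD 4 * k] := by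
    have := (innerZ_val_modEq x y).symm.mul_left' (c := 2)
    push_cast at this
    rwa [← mul_assoc, show (2 : ℤ) * 2 = 4 by norm_num] at this
  calc (euclWt (x + y) : ℤ)
      ≡ ∑ i, (((x + y) i).val : ℤ) ^ 2 [ZMOD 4 * k] := euclWt_modEq_sum_sq _
    _ ≡ ∑ i, (((x i).val : ℤ) + (y i).val) ^ 2 [ZMOD 4 * k] :=
        Int.ModEq.sum fun i _ => Int.sq_modEq_sq_of_modEq_two_mul (by
          simpa using ZMod.val_add_modEq (x i) (y i))
    _ = ∑ i, ((x i).val : ℤ) ^ 2 + ∑ i, ((y i).val : ℤ) ^ 2 +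
          2 * ∑ i, ((x i).val : ℤ) * (y i).val := by
        simp only [Finset.mul_sum, ← Finset.sum_add_distrib]
        exact Finset.sum_congr rfl fun i _ => by ring
    _ ≡ euclWt x + euclWt y + 2 * (innerZ x y).val [ZMOD 4 * k] :=
        ((euclWt_modEq_sum_sq x).symm.add (euclWt_modEq_sum_sq y).symm).add hcross

/-- `wt_E(x+y) ≡ wt_E(x) + wt_E(y) + 2⟨x,y⟩ (mod 4k)`. -/
theorem euclWt_add_congr {k n : ℕ} (hk : 1 ≤ k) (hn : 1 ≤ n)
    (x y : Fin n → ZMod (2 * k)) :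
    euclWt (x + y) ≡ euclWt x + euclWt y + 2 * (innerZ x y).val [MOD 4 * k] :=
  euclWt_add_congr_general hk x y
end
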